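/- Let k ≥ 0, let x_0, ..., x_N be pairwise distinct reals, and let Φ_{m,k} be the extended Newton basis polynomials. Then the (N+1)(k+1) × (N+1)(k+1) matrix R_k with entries R_k[(j,l),(m)] = (d^l/dx^l Φ_{m,k})(x_j) (rows ordered by point index j then derivative order l, columns by m) is block lower triangular with invertible diagonal blocks, hence invertible. -/

import Mathlib

/-!
Column `(i, r)` of `R` is the Newton-type polynomial `(X - x_i)^r ∏_{t<i} (X - x_t)^(k+1)`. It has a
root of order `k + 1` at every `x_j` with `j < i`, so all derivatives of order `≤ k` vanish there
and `R` is block lower triangular. Within the diagonal block `i = j` it has a root of order `r`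
at `x_i`, so the block is lower triangular with diagonal entries `r! ∏_{t<i} (x_i - x_t)^(k+1)`,
which are nonzero because the nodes are distinct.
-/

open Polynomial Finset

namespace Polynomial

variable {R : Type*} [CommRing R]

theorem eval_iterate_derivative_eq_zero_of_pow_dvd {p : R[X]} {a : R} {n l : ℕ}
    (h : (X - C a) ^ n ∣ p) (hl : l < n) : (derivative^[l] p).eval a = 0 :=
  dvd_iff_isRoot.mp <| (dvd_pow_self _ (Nat.sub_ne_zero_of_lt hl)).trans
    (pow_sub_dvd_iterate_derivative_of_pow_dvd l h)

theorem eval_iterate_derivative_X_sub_C_pow_mul (a : R) (n : ℕ) (q : R[X]) :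
    (derivative^[n] ((X - C a) ^ n * q)).eval a = n.factorial * q.eval a := by
  rw [iterate_derivative_mul, eval_finsetSum, sum_eq_single_of_mem 0 (mem_range.mpr n.succ_pos)]
  · rw [n.choose_zero_right, one_smul, eval_mul, n.sub_zero, iterate_derivative_X_sub_pow_self,
      Function.iterate_zero_apply, eval_natCast]
  · intro b hb hb0
    rw [iterate_derivative_X_sub_pow, eval_smul, eval_mul, eval_smul, eval_pow,
      Nat.sub_sub_self (mem_range_succ_iff.mp hb), eval_sub, eval_X, eval_C, sub_self,
      zero_pow hb0, smul_zero, zero_mul, smul_zero]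

noncomputable def extendedNewton (x : ℕ → R) (k m : ℕ) : R[X] :=
  (X - C (x (m / (k + 1)))) ^ (m % (k + 1)) *
    ∏ i ∈ range (m / (k + 1)), (X - C (x i)) ^ (k + 1)

variable {x : ℕ → R} {k i j l r : ℕ}

theorem extendedNewton_mul_add (hr : r ≤ k) :
    extendedNewton x k ((k + 1) * i + r) =
      (X - C (x i)) ^ r * ∏ t ∈ range i, (X - C (x t)) ^ (k + 1) := by
  have hr' : r < k + 1 := Nat.lt_succ_of_le hr
  rw [extendedNewton, Nat.mul_add_div k.succ_pos, Nat.div_eq_of_lt hr', add_zero,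
    Nat.mul_add_mod, Nat.mod_eq_of_lt hr']

theorem eval_iterate_derivative_extendedNewton_of_lt (hji : j < i) (hl : l ≤ k) (hr : r ≤ k) :
    (derivative^[l] (extendedNewton x k ((k + 1) * i + r))).eval (x j) = 0 := by
  refine eval_iterate_derivative_eq_zero_of_pow_dvd ?_ (Nat.lt_succ_of_le hl)
  rw [extendedNewton_mul_add hr]
  exact (dvd_prod_of_mem _ (mem_range.mpr hji)).mul_left _

theorem eval_iterate_derivative_extendedNewton_self_of_lt (hlr : l < r) (hr : r ≤ k) :
    (derivative^[l] (extendedNewton x k ((k + 1) * i + r))).eval (x i) = 0 := by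
  refine eval_iterate_derivative_eq_zero_of_pow_dvd ?_ hlr
  rw [extendedNewton_mul_add hr]
  exact dvd_mul_right _ _

theorem eval_iterate_derivative_extendedNewton_self (hr : r ≤ k) :
    (derivative^[r] (extendedNewton x k ((k + 1) * i + r))).eval (x i) =
      r.factorial * ∏ t ∈ range i, (x i - x t) ^ (k + 1) := by
  simp only [extendedNewton_mul_add hr, eval_iterate_derivative_X_sub_C_pow_mul, eval_prod,
    eval_pow, eval_sub, eval_X, eval_C]

theorem eval_iterate_derivative_extendedNewton_self_ne_zero [IsDomain R] [CharZero R]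
    (hx : ∀ t < i, x t ≠ x i) (hr : r ≤ k) :
    (derivative^[r] (extendedNewton x k ((k + 1) * i + r))).eval (x i) ≠ 0 := by
  rw [eval_iterate_derivative_extendedNewton_self hr]
  refine mul_ne_zero (Nat.cast_ne_zero.mpr r.factorial_ne_zero) (prod_ne_zero_iff.mpr ?_)
  intro t ht
  exact pow_ne_zero _ (sub_ne_zero.mpr (hx t (mem_range.mp ht)).symm)

end Polynomial

namespace Matrix

theorem BlockTriangular.det_eq_prod_det_submatrix_fst {R ι κ : Type*} [CommRing R]
    [Fintype ι] [LinearOrder ι] [Fintype κ] [DecidableEq κ] {M : Matrix (ι × κ) (ι × κ) R}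
    (hM : M.BlockTriangular Prod.fst) :
    M.det = ∏ i, (M.submatrix (Prod.mk i) (Prod.mk i)).det := by
  rw [hM.det_fintype]
  refine prod_congr rfl fun i _ => ?_
  let e : κ ≃ {p : ι × κ // p.1 = i} :=
    { toFun := fun l => ⟨(i, l), rfl⟩
      invFun := fun p => p.1.2
      left_inv := fun _ => rfl
      right_inv := by rintro ⟨⟨_, l⟩, rfl⟩; rfl }
  rw [← det_submatrix_equiv_self e]
  rfl

end Matrix

/-- The extended Newton collocation matrix `R_k`, with rows indexed by (point, derivative
order) and columns indexed by `m = (k+1)·i + r` (point `i`, power `r`), is block lower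
triangular with invertible diagonal blocks, hence invertible. -/
theorem extended_newton_collocation_matrix_invertible
    (N k : ℕ) (x : ℕ → ℝ)
    (hx : ∀ i j, i ≤ N → j ≤ N → x i = x j → i = j)
    (Φ : ℕ → Polynomial ℝ)
    (hΦ : ∀ m, Φ m = (Polynomial.X - Polynomial.C (x (m / (k + 1)))) ^ (m % (k + 1)) *
      ∏ i ∈ Finset.range (m / (k + 1)), (Polynomial.X - Polynomial.C (x i)) ^ (k + 1))
    (R : Matrix (Fin (N + 1) × Fin (k + 1)) (Fin (N + 1) × Fin (k + 1)) ℝ)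
    (hR : ∀ j l i r, R (j, l) (i, r) =
      (Polynomial.derivative^[(l : ℕ)] (Φ ((k + 1) * (i : ℕ) + (r : ℕ)))).eval (x j)) :
    (∀ j l i r, j < i → R (j, l) (i, r) = 0) ∧
    (∀ j : Fin (N + 1),
      (Matrix.of fun l r : Fin (k + 1) => R (j, l) (j, r)).det ≠ 0) ∧
    R.det ≠ 0 := by
  obtain rfl : Φ = extendedNewton x k := funext hΦ
  have hk (r : Fin (k + 1)) : (r : ℕ) ≤ k := Nat.le_of_lt_succ r.isLt
  have hlower (j l i r) (hji : j < i) : R (j, l) (i, r) = 0 := by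
    rw [hR]
    exact eval_iterate_derivative_extendedNewton_of_lt hji (hk l) (hk r)
  have hblock (j : Fin (N + 1)) : (Matrix.of fun l r : Fin (k + 1) => R (j, l) (j, r)).det ≠ 0 := by
    rw [Matrix.det_of_isLowerTriangular _ fun l r hlr => by
      rw [Matrix.of_apply, hR]
      exact eval_iterate_derivative_extendedNewton_self_of_lt hlr (hk r)]
    refine prod_ne_zero_iff.mpr fun r _ => ?_
    rw [Matrix.of_apply, hR]
    refine eval_iterate_derivative_extendedNewton_self_ne_zero (fun t ht hxt => ?_) (hk r)
    have := hx t j (by omega) (Nat.le_of_lt_succ j.isLt) hxt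
    omega
  refine ⟨hlower, hblock, ?_⟩
  have hRt : R.transpose.BlockTriangular Prod.fst := fun p q h => hlower q.1 q.2 p.1 p.2 h
  rw [← Matrix.det_transpose, hRt.det_eq_prod_det_submatrix_fst]
  refine prod_ne_zero_iff.mpr fun j _ => ?_
  rw [show R.transpose.submatrix (Prod.mk j) (Prod.mk j) =
    (Matrix.of fun l r : Fin (k + 1) => R (j, l) (j, r)).transpose from rfl, Matrix.det_transpose]
  exact hblock j
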